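/- Let (A, E, s) be a weakly idempotent complete extriangulated category. Then any extriangle of the form A →(a1,a2)ᵀ B1 ⊕ B2 →(0,b2) C ⇢δ is isomorphic to the direct sum of the extriangle ⟨B1 →id B1 → 0, 0⟩ and an extriangle ⟨A' →(a2 s) B2 →b2 C, δ'⟩, where (x s) : B1 ⊕ A' → A is an isomorphism for suitable morphisms x : B1 → A and s : A' → A. In particular, b2 : B2 → C is also a deflation. -/

import Mathlib

/-!
Common axiomatic framework: extriangulated categories in the sense of Nakaoka–Palu,
formalised as a biadditive functor `E` together with a realisation predicate
`IsExtriangle` subject to the axioms (ET1)–(ET4), (ET3)ᵒᵖ, (ET4)ᵒᵖ.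
-/

open CategoryTheory CategoryTheory.Limits ZeroObject

attribute [local instance] CategoryTheory.Limits.hasBinaryBiproducts_of_finite_biproducts

universe v u

namespace ExtriPaper

/-- The data underlying an extriangulated category: a biadditive functor `E` and,
for each extension `δ ∈ E(X, A)`, the predicate picking out the pairs of composable
morphisms `A ⟶ B ⟶ X` belonging to the equivalence class `s(δ)`. -/
structure PreExt (C : Type u) [Category.{v} C] [Preadditive C] where
  E : Cᵒᵖ ⥤ C ⥤ AddCommGrpCat.{v}
  IsExtriangle : ∀ {A B X : C}, (A ⟶ B) → (B ⟶ X) → ↥((E.obj (Opposite.op X)).obj A) → Prop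

namespace PreExt

variable {C : Type u} [Category.{v} C] [Preadditive C]
variable (S : PreExt C)

/-- The group `E(X, A)` of extensions of `X` by `A`. -/
abbrev Ext (X A : C) : Type v := ↥((S.E.obj (Opposite.op X)).obj A)

/-- Pushforward `a_* δ` of an extension along `a : A ⟶ A'`. -/
def push {X A A' : C} (a : A ⟶ A') (δ : S.Ext X A) : S.Ext X A' :=
  (S.E.obj (Opposite.op X)).map a δ

/-- Pullback `c^* δ` of an extension along `c : X' ⟶ X`. -/
def pull {X' X A : C} (c : X' ⟶ X) (δ : S.Ext X A) : S.Ext X' A :=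
  (S.E.map c.op).app A δ

section Axioms

variable [HasZeroObject C] [HasFiniteBiproducts C]

/-- The direct sum `δ ⊕ δ'` of two extensions. -/
noncomputable def sumExt {X X' A A' : C} (δ : S.Ext X A) (δ' : S.Ext X' A') :
    S.Ext (X ⊞ X') (A ⊞ A') :=
  S.push biprod.inl (S.pull biprod.fst δ) + S.push biprod.inr (S.pull biprod.snd δ')

/-- The axioms of an extriangulated category (Nakaoka–Palu): `E` is biadditive,
`s` (encoded by `IsExtriangle`) is an additive realisation defined on equivalence
classes, and the axioms (ET3), (ET3)ᵒᵖ, (ET4), (ET4)ᵒᵖ hold. -/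
structure IsET : Prop where
  /-- Biadditivity of `E` in the covariant variable. -/
  push_add : ∀ {X A A' : C} (a b : A ⟶ A') (δ : S.Ext X A),
      S.push (a + b) δ = S.push a δ + S.push b δ
  /-- Biadditivity of `E` in the contravariant variable. -/
  pull_add : ∀ {X X' A : C} (c d : X' ⟶ X) (δ : S.Ext X A),
      S.pull (c + d) δ = S.pull c δ + S.pull d δ
  /-- Every extension is realised by a pair of composable morphisms. -/
  realize_exists : ∀ {A X : C} (δ : S.Ext X A),
      ∃ (B : C) (f : A ⟶ B) (g : B ⟶ X), S.IsExtriangle f g δ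
  /-- The realisation is closed under equivalence of pairs of composable morphisms. -/
  realize_iso : ∀ {A B B' X : C} {f : A ⟶ B} {g : B ⟶ X} {δ : S.Ext X A} (e : B ≅ B'),
      S.IsExtriangle f g δ → S.IsExtriangle (f ≫ e.hom) (e.inv ≫ g) δ
  /-- Any two realisations of the same extension are equivalent. -/
  realize_unique : ∀ {A B B' X : C} {f : A ⟶ B} {g : B ⟶ X} {f' : A ⟶ B'} {g' : B' ⟶ X}
      {δ : S.Ext X A}, S.IsExtriangle f g δ → S.IsExtriangle f' g' δ →
      ∃ e : B ≅ B', f ≫ e.hom = f' ∧ e.hom ≫ g' = g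
  /-- Morphisms of extensions lift to morphisms of extriangles. -/
  realize_map : ∀ {A B X A' B' X' : C} {f : A ⟶ B} {g : B ⟶ X} {δ : S.Ext X A}
      {f' : A' ⟶ B'} {g' : B' ⟶ X'} {δ' : S.Ext X' A'},
      S.IsExtriangle f g δ → S.IsExtriangle f' g' δ' →
      ∀ (a : A ⟶ A') (c : X ⟶ X'), S.push a δ = S.pull c δ' →
      ∃ b : B ⟶ B', f ≫ b = a ≫ f' ∧ b ≫ g' = g ≫ c
  /-- The zero extension is realised by the split pair. -/
  realize_zero : ∀ (A X : C),
      S.IsExtriangle (biprod.inl : A ⟶ A ⊞ X) (biprod.snd : A ⊞ X ⟶ X) (0 : S.Ext X A)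
  /-- The realisation is additive. -/
  realize_sum : ∀ {A B X A' B' X' : C} {f : A ⟶ B} {g : B ⟶ X} {δ : S.Ext X A}
      {f' : A' ⟶ B'} {g' : B' ⟶ X'} {δ' : S.Ext X' A'},
      S.IsExtriangle f g δ → S.IsExtriangle f' g' δ' →
      S.IsExtriangle (biprod.map f f') (biprod.map g g') (S.sumExt δ δ')
  /-- Axiom (ET3). -/
  et3 : ∀ {A B X A' B' X' : C} {f : A ⟶ B} {g : B ⟶ X} {δ : S.Ext X A}
      {f' : A' ⟶ B'} {g' : B' ⟶ X'} {δ' : S.Ext X' A'},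
      S.IsExtriangle f g δ → S.IsExtriangle f' g' δ' →
      ∀ (a : A ⟶ A') (b : B ⟶ B'), f ≫ b = a ≫ f' →
      ∃ c : X ⟶ X', g ≫ c = b ≫ g' ∧ S.push a δ = S.pull c δ'
  /-- Axiom (ET3)ᵒᵖ. -/
  et3op : ∀ {A B X A' B' X' : C} {f : A ⟶ B} {g : B ⟶ X} {δ : S.Ext X A}
      {f' : A' ⟶ B'} {g' : B' ⟶ X'} {δ' : S.Ext X' A'},
      S.IsExtriangle f g δ → S.IsExtriangle f' g' δ' →
      ∀ (b : B ⟶ B') (c : X ⟶ X'), g ≫ c = b ≫ g' →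
      ∃ a : A ⟶ A', f ≫ b = a ≫ f' ∧ S.push a δ = S.pull c δ'
  /-- Axiom (ET4). -/
  et4 : ∀ {A B D F G : C} {f : A ⟶ B} {f' : B ⟶ D} {δ : S.Ext D A}
      {g : B ⟶ G} {g' : G ⟶ F} {δ' : S.Ext F B},
      S.IsExtriangle f f' δ → S.IsExtriangle g g' δ' →
      ∃ (E₀ : C) (h : G ⟶ E₀) (d : D ⟶ E₀) (e : E₀ ⟶ F) (δ'' : S.Ext E₀ A),
        S.IsExtriangle (f ≫ g) h δ'' ∧
        S.IsExtriangle d e (S.push f' δ') ∧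
        S.pull d δ'' = δ ∧
        S.push f δ'' = S.pull e δ' ∧
        f' ≫ d = g ≫ h ∧ h ≫ e = g'
  /-- Axiom (ET4)ᵒᵖ. -/
  et4op : ∀ {D B A F G : C} {p : D ⟶ B} {f₁ : B ⟶ A} {δ₁ : S.Ext A D}
      {q : F ⟶ G} {g₁ : G ⟶ B} {δ₁' : S.Ext B F},
      S.IsExtriangle p f₁ δ₁ → S.IsExtriangle q g₁ δ₁' →
      ∃ (E₀ : C) (h : E₀ ⟶ G) (d : E₀ ⟶ D) (e : F ⟶ E₀) (δ'' : S.Ext A E₀),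
        S.IsExtriangle h (g₁ ≫ f₁) δ'' ∧
        S.IsExtriangle e d (S.pull p δ₁') ∧
        S.push d δ'' = δ₁ ∧
        S.pull f₁ δ'' = S.push e δ₁' ∧
        d ≫ p = h ≫ g₁ ∧ e ≫ h = q

end Axioms

/-- A morphism is an inflation if it occurs as the first morphism of an extriangle. -/
def IsInflation {A B : C} (f : A ⟶ B) : Prop :=
  ∃ (X : C) (g : B ⟶ X) (δ : S.Ext X A), S.IsExtriangle f g δ

/-- A morphism is a deflation if it occurs as the second morphism of an extriangle. -/
def IsDeflation {B X : C} (g : B ⟶ X) : Prop :=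
  ∃ (A : C) (f : A ⟶ B) (δ : S.Ext X A), S.IsExtriangle f g δ

/-- An isomorphism of extriangles: a triple of isomorphisms compatible with the
structure morphisms and identifying the two extensions. -/
def TriIso {A B X A' B' X' : C} (f : A ⟶ B) (g : B ⟶ X) (δ : S.Ext X A)
    (f' : A' ⟶ B') (g' : B' ⟶ X') (δ' : S.Ext X' A') : Prop :=
  ∃ (iA : A ≅ A') (iB : B ≅ B') (iX : X ≅ X'),
    f ≫ iB.hom = iA.hom ≫ f' ∧ g ≫ iX.hom = iB.hom ≫ g' ∧
    S.push iA.hom δ = S.pull iX.hom δ'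

/-- A chain of `t` composable extriangles: inflations `obj i ⟶ obj (i+1)` each fitting
in an extriangle with cone `factor i`.  This underlies filtrations, inflation series
and composition series alike. -/
structure FChain (t : ℕ) where
  obj : Fin (t + 1) → C
  factor : Fin t → C
  f : ∀ i : Fin t, obj i.castSucc ⟶ obj i.succ
  g : ∀ i : Fin t, obj i.succ ⟶ factor i
  δ : ∀ i : Fin t, S.Ext (factor i) (obj i.castSucc)
  ext : ∀ i : Fin t, S.IsExtriangle (f i) (g i) (δ i)

/-- The composite `obj 0 ⟶ obj i` of the morphisms of a chain. -/
def FChain.comp {t : ℕ} (c : S.FChain t) : ∀ i : Fin (t + 1), c.obj 0 ⟶ c.obj i :=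
  Fin.induction (𝟙 _) (fun i ih => ih ≫ c.f i)

/-- The subcategory `F(P)` of objects admitting a filtration with factors in `P`. -/
def Filt (P : Set C) : Set C :=
  {M | ∃ (t : ℕ) (c : S.FChain t), IsZero (c.obj 0) ∧ c.obj (Fin.last t) = M ∧
      ∀ i, c.factor i ∈ P}

/-- An `(E, s)`-simple object: a non-zero object `M` such that in every extriangle
`A →a M → X ⇢` the inflation `a` is zero or an isomorphism. -/
def SSimple (M : C) : Prop :=
  ¬ IsZero M ∧ ∀ (A X : C) (a : A ⟶ M) (g : M ⟶ X) (δ : S.Ext X A),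
    S.IsExtriangle a g δ → a = 0 ∨ IsIso a

/-- The zero objects of `C` are `(E, s)`-simple-like. -/
def ZeroSimpleLike : Prop :=
  ∀ (A Z X : C) (f : A ⟶ Z) (g : Z ⟶ X) (δ : S.Ext X A),
    IsZero Z → S.IsExtriangle f g δ → IsZero A

/-- `c` is an `(E, s)`-composition series of `M`. -/
def IsCompSeries {t : ℕ} (c : S.FChain t) (M : C) : Prop :=
  IsZero (c.obj 0) ∧ c.obj (Fin.last t) = M ∧ ∀ i, S.SSimple (c.factor i)

/-- `(A, E, s)` is a length extriangulated category. -/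
def LengthCat : Prop :=
  ∀ M : C, (∃ (t : ℕ) (c : S.FChain t), S.IsCompSeries c M) ∧
    ∃ N : ℕ, ∀ (t : ℕ) (c : S.FChain t), S.IsCompSeries c M → t ≤ N

/-- `(A, E, s)` is a Jordan–Hölder extriangulated category: any two composition series
of an object have the same length and, up to a permutation, isomorphic simple factors. -/
def JordanHolder : Prop :=
  ∀ (M : C) (t t' : ℕ) (c : S.FChain t) (c' : S.FChain t'),
    S.IsCompSeries c M → S.IsCompSeries c' M →
    ∃ e : Fin t ≃ Fin t', ∀ i, Nonempty (c.factor i ≅ c'.factor (e i))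

/-- `c` is an `(E, s)`-inflation series of `B`: a filtration of `B` with non-zero factors. -/
def IsInflSeries {t : ℕ} (c : S.FChain t) (B : C) : Prop :=
  IsZero (c.obj 0) ∧ c.obj (Fin.last t) = B ∧ ∀ i, ¬ IsZero (c.factor i)

/-- `X` and `Y` admit isomorphic `(E, s)`-inflation series. -/
def HaveIsoInflSeries (X Y : C) : Prop :=
  ∃ (t : ℕ) (c d : S.FChain t), S.IsInflSeries c X ∧ S.IsInflSeries d Y ∧
    ∃ e : Equiv.Perm (Fin t), ∀ i, Nonempty (c.factor i ≅ d.factor (e i))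

/-- Simplicity of `M` with respect to the extriangulated structure restricted to the
extension-closed subcategory `𝒮`: extriangles of the restricted structure are exactly
the ambient extriangles all of whose terms lie in `𝒮`. -/
def SimpleIn (𝒮 : Set C) (M : C) : Prop :=
  M ∈ 𝒮 ∧ ¬ IsZero M ∧ ∀ (A X : C) (a : A ⟶ M) (g : M ⟶ X) (δ : S.Ext X A),
    A ∈ 𝒮 → X ∈ 𝒮 → S.IsExtriangle a g δ → a = 0 ∨ IsIso a

/-- `c` is a composition series of `M` in the extriangulated structure restricted to `𝒮`. -/
def IsCompSeriesIn (𝒮 : Set C) {t : ℕ} (c : S.FChain t) (M : C) : Prop :=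
  IsZero (c.obj 0) ∧ c.obj (Fin.last t) = M ∧ (∀ i, c.obj i ∈ 𝒮) ∧
    ∀ i, S.SimpleIn 𝒮 (c.factor i)

section Star

variable [HasZeroObject C] [HasFiniteBiproducts C]

/-- The subcategory `P ∗ Q` of objects `Z` admitting an extriangle `X → Z → Y ⇢`
with `X ∈ P` and `Y ∈ Q`. -/
def star (P Q : Set C) : Set C :=
  {Z | ∃ (X Y : C) (f : X ⟶ Z) (g : Z ⟶ Y) (δ : S.Ext Y X),
      X ∈ P ∧ Y ∈ Q ∧ S.IsExtriangle f g δ}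

/-- Iterated `∗` of a list of subcategories (the empty `∗` being the zero objects). -/
def starMany : List (Set C) → Set C
  | [] => {Z | IsZero Z}
  | P :: l => S.star P (starMany l)

end Star

/-- The relative projectives `P(P) = {Z : E(Z, Y) = 0 for all Y ∈ F(P)}`. -/
def projSet (P : Set C) : Set C :=
  {Z | ∀ Y ∈ S.Filt P, ∀ δ : S.Ext Z Y, δ = 0}

/-- `Hom(W, −)` is left exact on the extriangulated structure restricted to `𝒮`:
for every extriangle `A →a B → X ⇢` with all terms in `𝒮`, composition with `a`
is injective on morphisms from `W`. -/
def HomLeftExactOn (W : C) (𝒮 : Set C) : Prop :=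
  ∀ (A B X : C) (a : A ⟶ B) (g : B ⟶ X) (δ : S.Ext X A),
    A ∈ 𝒮 → B ∈ 𝒮 → X ∈ 𝒮 → S.IsExtriangle a g δ →
    ∀ φ ψ : W ⟶ A, φ ≫ a = ψ ≫ a → φ = ψ

/-- The subset of the free abelian group on objects consisting of the defining
relations of the Grothendieck group `K₀(A, E, s)`. -/
def K0Rels : Set (FreeAbelianGroup C) :=
  {x | ∃ (A B X : C) (f : A ⟶ B) (g : B ⟶ X) (δ : S.Ext X A), S.IsExtriangle f g δ ∧
      x = FreeAbelianGroup.of A + FreeAbelianGroup.of X - FreeAbelianGroup.of B} ∪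
  {x | ∃ (X Y : C) (_ : X ≅ Y), x = FreeAbelianGroup.of X - FreeAbelianGroup.of Y}

/-- `[M] = [M']` in the Grothendieck group `K₀(A, E, s)`, the quotient of the free
abelian group on (isomorphism classes of) objects by the extriangle relations. -/
def GrpRel (M M' : C) : Prop :=
  FreeAbelianGroup.of M - FreeAbelianGroup.of M' ∈ AddSubgroup.closure S.K0Rels

end PreExt

/-- The congruence defining the Grothendieck monoid: `MonRel S M M'` holds if and only
if `[M] = [M']` in the Grothendieck monoid `M(A, E, s)`, the quotient of the monoid of
isomorphism classes of objects (under `⊞`) by the congruence generated by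
`[B] ∼ [A] + [X]` for each extriangle `A → B → X ⇢`. -/
inductive MonRel {C : Type u} [Category.{v} C] [Preadditive C] [HasZeroObject C]
    [HasFiniteBiproducts C] (S : PreExt C) : C → C → Prop
  | of {A B X : C} {f : A ⟶ B} {g : B ⟶ X} {δ : S.Ext X A}
      (h : S.IsExtriangle f g δ) : MonRel S B (A ⊞ X)
  | iso {X Y : C} (e : X ≅ Y) : MonRel S X Y
  | symm {X Y : C} : MonRel S X Y → MonRel S Y X
  | trans {X Y Z : C} : MonRel S X Y → MonRel S Y Z → MonRel S X Z
  | add {X Y : C} (Z : C) : MonRel S X Y → MonRel S (X ⊞ Z) (Y ⊞ Z)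

/-- `[M]` is an atom of the Grothendieck monoid `M(A, E, s)`. -/
def IsAtomClass {C : Type u} [Category.{v} C] [Preadditive C] [HasZeroObject C]
    [HasFiniteBiproducts C] (S : PreExt C) (M : C) : Prop :=
  ¬ MonRel S M 0 ∧ ∀ X Y : C, MonRel S M (X ⊞ Y) → MonRel S X 0 ∨ MonRel S Y 0

/-- An additive category is weakly idempotent complete if every retraction admits a kernel. -/
def WeaklyIdemComplete (C : Type u) [Category.{v} C] [Preadditive C] : Prop :=
  ∀ (X Y : C) (r : X ⟶ Y), IsSplitEpi r → HasKernel r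

/-- A set of objects is closed under direct summands. -/
def ClosedSummands {C : Type u} [Category.{v} C] [Preadditive C] [HasZeroObject C]
    [HasFiniteBiproducts C] (P : Set C) : Prop :=
  ∀ (X Y Z : C), Z ∈ P → Nonempty (Z ≅ X ⊞ Y) → X ∈ P

/-- A Krull–Schmidt category: every object is a finite biproduct of objects having
local endomorphism rings. -/
def KrullSchmidtCat (C : Type u) [Category.{v} C] [Preadditive C] [HasZeroObject C]
    [HasFiniteBiproducts C] : Prop :=
  ∀ X : C, ∃ (n : ℕ) (Y : Fin n → C),
    (∀ i, IsLocalRing (End (Y i))) ∧ Nonempty (X ≅ ⨁ Y)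

/-- The closure `add Ψ` of a set of objects under finite direct sums and isomorphisms. -/
def addSet {C : Type u} [Category.{v} C] [Preadditive C] [HasZeroObject C]
    [HasFiniteBiproducts C] (P : Set C) : Set C :=
  {X | ∃ (m : ℕ) (f : Fin m → C), (∀ k, f k ∈ P) ∧ Nonempty (X ≅ ⨁ f)}

/-- An indecomposable object. -/
def Indec {C : Type u} [Category.{v} C] [Preadditive C] [HasZeroObject C]
    [HasFiniteBiproducts C] (X : C) : Prop :=
  ¬ IsZero X ∧ ∀ (Y Z : C), Nonempty (X ≅ Y ⊞ Z) → IsZero Y ∨ IsZero Z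

/-- A morphism `q` is right minimal. -/
def RightMinimal {C : Type u} [Category.{v} C] {X Y : C} (q : X ⟶ Y) : Prop :=
  ∀ g : X ⟶ X, g ≫ q = q → IsIso g

/-- The extra structure making an extriangulated category into an artin `R`-linear
extriangulated category: an `R`-module structure on each `E(X, A)` for which `E` is
`R`-bilinear, with all Hom-sets and all `E(X, A)` of finite length over `R`. -/
structure ArtinLinear {C : Type u} [Category.{v} C] [Preadditive C]
    (R : Type*) [CommRing R] [CategoryTheory.Linear R C] (S : PreExt C) where
  module : ∀ X A : C, Module R (S.Ext X A)
  push_smul : ∀ {X A A' : C} (r : R) (a : A ⟶ A') (δ : S.Ext X A),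
      S.push (r • a) δ = letI := module X A'; r • S.push a δ
  pull_smul : ∀ {X' X A : C} (r : R) (c : X' ⟶ X) (δ : S.Ext X A),
      S.pull (r • c) δ = letI := module X' A; r • S.pull c δ
  homFinite : ∀ X Y : C, IsFiniteLength R (X ⟶ Y)
  extFinite : ∀ X A : C, letI := module X A; IsFiniteLength R (S.Ext X A)

/-- An `E`-stratifying system: a finite family of indecomposable objects subject to
the orthogonality axioms (S1) and (S2). -/
structure IsStratSys {C : Type u} [Category.{v} C] [Preadditive C] [HasZeroObject C]
    [HasFiniteBiproducts C] (S : PreExt C) {n : ℕ} (Φ : Fin n → C) : Prop where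
  indec : ∀ i, Indec (Φ i)
  s1 : ∀ i j : Fin n, i < j → ∀ φ : Φ j ⟶ Φ i, φ = 0
  s2 : ∀ i j : Fin n, i ≤ j → ∀ δ : S.Ext (Φ j) (Φ i), δ = 0

/-- The data of extriangles `K i → Q i → Φ i ⇢η i` with `K i ∈ F(Φ_{j>i})`, as in
axiom (PS2) of a projective `E`-stratifying system. -/
structure ProjData {C : Type u} [Category.{v} C] [Preadditive C]
    (S : PreExt C) {n : ℕ} (Φ Q : Fin n → C) where
  K : Fin n → C
  k : ∀ i, K i ⟶ Q i
  q : ∀ i, Q i ⟶ Φ i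
  η : ∀ i, S.Ext (Φ i) (K i)
  ext : ∀ i, S.IsExtriangle (k i) (q i) (η i)
  kmem : ∀ i, K i ∈ S.Filt (Φ '' {j | i < j})

/-- `(Φ, Q)` is a projective `E`-stratifying system. -/
def IsProjSS {C : Type u} [Category.{v} C] [Preadditive C] [HasZeroObject C]
    [HasFiniteBiproducts C] (S : PreExt C) {n : ℕ} (Φ Q : Fin n → C) : Prop :=
  IsStratSys S Φ ∧ (∀ i j : Fin n, ∀ δ : S.Ext (Q i) (Φ j), δ = 0) ∧
    Nonempty (ProjData S Φ Q)

/-- `(Φ, Q)` is a minimal projective `E`-stratifying system: the morphisms `q i` of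
the extriangles witnessing (PS2) may be chosen right minimal. -/
def IsMinProjSS {C : Type u} [Category.{v} C] [Preadditive C] [HasZeroObject C]
    [HasFiniteBiproducts C] (S : PreExt C) {n : ℕ} (Φ Q : Fin n → C) : Prop :=
  IsStratSys S Φ ∧ (∀ i j : Fin n, ∀ δ : S.Ext (Q i) (Φ j), δ = 0) ∧
    ∃ d : ProjData S Φ Q, ∀ i, RightMinimal (d.q i)

section Statements

variable {C : Type u} [Category.{v} C] [Preadditive C] [HasZeroObject C] [HasFiniteBiproducts C]

/-!
Since `biprod.inl : B₁ ⟶ B₁ ⊞ B₂` is killed by the deflation, it factors through the inflation,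
which gives a section `x` of `a₁` with `x ≫ a₂ = 0`. Weak idempotent completeness provides a
kernel `s` of the split epimorphism `a₁`, hence `A ≅ B₁ ⊞ A'`. As `a₁_* δ = 0`, transporting the
extriangle along this isomorphism and `X ≅ 0 ⊞ X` puts it in the split form
`B₁ ⊞ A' → B₁ ⊞ B₂ → 0 ⊞ X` with extension `0 ⊕ δ'`. Comparing it with the sum of
`B₁ = B₁ → 0` and a realisation `A' → M → X` of `δ'`, the isomorphism `B₁ ⊞ B₂ ≅ B₁ ⊞ M` fixes
`B₁`, so its remaining diagonal entry `B₂ ≅ M` identifies that realisation with `A' → B₂ → X`.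
-/

section Preadditive

variable {𝒞 : Type*} [Category 𝒞]

lemma isIso_of_isIso_comp_of_isIso_comp {P Q : 𝒞} (b : P ⟶ Q) (b' : Q ⟶ P)
    [IsIso (b ≫ b')] [IsIso (b' ≫ b)] : IsIso b := by
  have : Mono b := mono_of_mono b b'
  have : IsSplitEpi b := ⟨⟨⟨inv (b' ≫ b) ≫ b', by simp⟩⟩⟩
  exact isIso_of_mono_of_isSplitEpi b

variable [Preadditive 𝒞]

lemma isIso_biprod_inr_hom_snd {B P Q : 𝒞} [HasBinaryBiproduct B P] [HasBinaryBiproduct B Q]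
    (e : B ⊞ P ≅ B ⊞ Q) (he : biprod.inl ≫ e.hom = biprod.inl) :
    IsIso (biprod.inr ≫ e.hom ≫ biprod.snd) := by
  have he' : biprod.inl ≫ e.inv = biprod.inl := by
    rw [← he, Category.assoc, e.hom_inv_id, Category.comp_id]
  -- The inverse is `inr ≫ e.inv ≫ snd`: expanding `snd ≫ inr = 𝟙 - fst ≫ inl`, the correction
  -- term vanishes because `e.inv` fixes `inl` as well.
  have hsnd_inr {R : 𝒞} [HasBinaryBiproduct B R] :
      (biprod.snd : B ⊞ R ⟶ R) ≫ biprod.inr = 𝟙 _ - biprod.fst ≫ biprod.inl :=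
    eq_sub_of_add_eq' biprod.total
  refine ⟨biprod.inr ≫ e.inv ≫ biprod.snd, ?_, ?_⟩
  · simp only [Category.assoc, reassoc_of% hsnd_inr]
    simp [reassoc_of% he']
  · simp only [Category.assoc, reassoc_of% hsnd_inr]
    simp [reassoc_of% he]

@[simps]
noncomputable def kernelSplitIso {A B : 𝒞} {a : A ⟶ B} {x : B ⟶ A} (hx : x ≫ a = 𝟙 B)
    [HasKernel a] [HasBinaryBiproduct B (kernel a)] : A ≅ B ⊞ kernel a where
  hom := biprod.lift a (kernel.lift a (𝟙 A - a ≫ x) (by simp [hx]))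
  inv := biprod.desc x (kernel.ι a)
  hom_inv_id := by simp
  inv_hom_id := by ext <;> simp [hx, reassoc_of% hx]

end Preadditive

namespace PreExt

section Additive

variable {𝒞 : Type*} [Category 𝒞] [Preadditive 𝒞] (S : PreExt 𝒞)

@[simp]
lemma push_id {X A : 𝒞} (δ : S.Ext X A) : S.push (𝟙 A) δ = δ := by
  simp [push]

lemma push_comp {X A A' A'' : 𝒞} (a : A ⟶ A') (b : A' ⟶ A'') (δ : S.Ext X A) :
    S.push (a ≫ b) δ = S.push b (S.push a δ) := by
  simp [push]

@[simp]
lemma pull_id {X A : 𝒞} (δ : S.Ext X A) : S.pull (𝟙 X) δ = δ := by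
  simp [pull]

lemma pull_comp {X'' X' X A : 𝒞} (c : X'' ⟶ X') (d : X' ⟶ X) (δ : S.Ext X A) :
    S.pull (c ≫ d) δ = S.pull c (S.pull d δ) := by
  simp [pull]

lemma push_pull {X' X A A' : 𝒞} (c : X' ⟶ X) (a : A ⟶ A') (δ : S.Ext X A) :
    S.push a (S.pull c δ) = S.pull c (S.push a δ) := by
  simp only [push, pull]
  rw [← ConcreteCategory.comp_apply, ← ConcreteCategory.comp_apply, NatTrans.naturality]

@[simp]
lemma push_zero {X A A' : 𝒞} (a : A ⟶ A') : S.push a (0 : S.Ext X A) = 0 := by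
  simp [push]

@[simp]
lemma pull_zero {X' X A : 𝒞} (c : X' ⟶ X) : S.pull c (0 : S.Ext X A) = 0 := by
  simp [pull]

lemma push_inv_eq_pull_inv {A A' X X' : 𝒞} {iA : A ≅ A'} {iX : X ≅ X'} {δ : S.Ext X A}
    {δ' : S.Ext X' A'} (h : S.push iA.hom δ = S.pull iX.hom δ') :
    S.push iA.inv δ' = S.pull iX.inv δ := by
  calc S.push iA.inv δ' = S.push iA.inv (S.pull iX.inv (S.pull iX.hom δ')) := by
        rw [← pull_comp, iX.inv_hom_id, pull_id]
    _ = S.pull iX.inv δ := by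
        rw [← h, push_pull, ← push_comp, iA.hom_inv_id, push_id]

variable [HasFiniteBiproducts 𝒞]

lemma pull_inr_sumExt_zero_left {X X' A A' : 𝒞} (δ : S.Ext X' A') :
    S.pull biprod.inr (S.sumExt (0 : S.Ext X A) δ) = S.push biprod.inr δ := by
  simp [sumExt, push_pull, ← pull_comp]

lemma IsET.push_biprod_lift_of_push_eq_zero {S : PreExt 𝒞} (hS : S.IsET) {A B A' X : 𝒞}
    {a : A ⟶ B} {t : A ⟶ A'} {δ : S.Ext X A} (ha : S.push a δ = 0) :
    S.push (biprod.lift a t) δ = S.push biprod.inr (S.push t δ) := by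
  rw [biprod.lift_eq, hS.push_add, push_comp, push_comp, ha, push_zero, zero_add]

end Additive

variable {S : PreExt C}

namespace IsET

lemma isExtriangle_id_zero (hS : S.IsET) (W : C) :
    S.IsExtriangle (𝟙 W) (0 : W ⟶ 0) (0 : S.Ext 0 W) := by
  simpa using hS.realize_iso (isoBiprodZero (isZero_zero C)).symm (hS.realize_zero W 0)

variable {A B X : C} {f : A ⟶ B} {g : B ⟶ X} {δ : S.Ext X A}

lemma push_eq_zero (hS : S.IsET) (hT : S.IsExtriangle f g δ) : S.push f δ = 0 := by
  obtain ⟨a, hfa, hδ⟩ :=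
    hS.et3op hT (hS.isExtriangle_id_zero B) (𝟙 B) (0 : X ⟶ 0) (by simp)
  simp only [Category.comp_id] at hfa
  rw [hfa, hδ, pull_zero]

lemma exists_lift_of_comp_eq_zero (hS : S.IsET) (hT : S.IsExtriangle f g δ) {W : C}
    (φ : W ⟶ B) (hφ : φ ≫ g = 0) : ∃ w : W ⟶ A, w ≫ f = φ := by
  obtain ⟨w, hw, -⟩ := hS.et3op (hS.isExtriangle_id_zero W) hT φ 0 (by simp [hφ])
  exact ⟨w, by simpa using hw.symm⟩

lemma isIso_of_comp_eq_self (hS : S.IsET) (hT : S.IsExtriangle f g δ) (u : B ⟶ B)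
    (hfu : f ≫ u = f) (hug : u ≫ g = g) : IsIso u := by
  obtain ⟨w, hw⟩ := hS.exists_lift_of_comp_eq_zero hT (𝟙 B - u) (by simp [hug])
  have hu : u = 𝟙 B - w ≫ f := by rw [hw, sub_sub_cancel]
  have hsq : (w ≫ f) ≫ w ≫ f = 0 := by
    rw [Category.assoc, hw]
    simp [hfu]
  subst hu
  exact ⟨𝟙 B + w ≫ f, by simp [Preadditive.sub_comp, hsq], by simp [Preadditive.add_comp, hsq]⟩

variable {A' B' X' : C} {f' : A' ⟶ B'} {g' : B' ⟶ X'} {δ' : S.Ext X' A'}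

lemma isIso₂_of_isIso₁₃ (hS : S.IsET) (hT : S.IsExtriangle f g δ)
    (hT' : S.IsExtriangle f' g' δ') (iA : A ≅ A') (iX : X ≅ X') (b : B ⟶ B')
    (hf : f ≫ b = iA.hom ≫ f') (hg : b ≫ g' = g ≫ iX.hom)
    (hδ : S.push iA.hom δ = S.pull iX.hom δ') : IsIso b := by
  obtain ⟨b', hf', hg'⟩ := hS.realize_map hT' hT iA.inv iX.inv (S.push_inv_eq_pull_inv hδ)
  have : IsIso (b ≫ b') := hS.isIso_of_comp_eq_self hT _
    (by simp [reassoc_of% hf, hf']) (by simp [hg', reassoc_of% hg])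
  have : IsIso (b' ≫ b) := hS.isIso_of_comp_eq_self hT' _
    (by simp [reassoc_of% hf', hf]) (by simp [hg, reassoc_of% hg'])
  exact isIso_of_isIso_comp_of_isIso_comp b b'

lemma isExtriangle_of_triIso (hS : S.IsET) (hT : S.IsExtriangle f g δ)
    (hTI : S.TriIso f g δ f' g' δ') : S.IsExtriangle f' g' δ' := by
  obtain ⟨iA, iB, iX, hf, hg, hδ⟩ := hTI
  obtain ⟨B'', f'', g'', hT''⟩ := hS.realize_exists δ'
  obtain ⟨b, hfb, hbg⟩ := hS.realize_map hT hT'' iA.hom iX.hom hδ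
  have := hS.isIso₂_of_isIso₁₃ hT hT'' iA iX b hfb hbg hδ
  convert hS.realize_iso (iB.symm ≪≫ asIso b).symm hT'' using 1
  · simp [← cancel_epi iA.hom, ← reassoc_of% hfb, hf]
  · simp [hbg, hg]

lemma isExtriangle_of_biprod_map_id (hS : S.IsET) {B₀ : C}
    (h : S.IsExtriangle (biprod.map (𝟙 B₀) f) (biprod.map (0 : B₀ ⟶ 0) g)
      (S.sumExt (0 : S.Ext 0 B₀) δ)) : S.IsExtriangle f g δ := by
  obtain ⟨M, u, v, hT⟩ := hS.realize_exists δ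
  obtain ⟨e, hfe, heg⟩ := hS.realize_unique h (hS.realize_sum (hS.isExtriangle_id_zero B₀) hT)
  have := isIso_biprod_inr_hom_snd e (by simpa using biprod.inl ≫= hfe)
  have hfm : f ≫ biprod.inr ≫ e.hom ≫ biprod.snd = u := by
    simpa using biprod.inr ≫= hfe =≫ biprod.snd
  have hmg : (biprod.inr ≫ e.hom ≫ biprod.snd) ≫ v = g := by
    simpa using biprod.inr ≫= heg =≫ biprod.snd
  simpa [← hfm, hmg] using hS.realize_iso (asIso (biprod.inr ≫ e.hom ≫ biprod.snd)).symm hT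

end IsET

end PreExt

theorem stmt1 (S : PreExt C) (hS : S.IsET) (hwic : WeaklyIdemComplete C)
    {A B₁ B₂ X : C} (a₁ : A ⟶ B₁) (a₂ : A ⟶ B₂) (b₂ : B₂ ⟶ X) (δ : S.Ext X A)
    (h : S.IsExtriangle (biprod.lift a₁ a₂) (biprod.desc 0 b₂) δ) :
    ∃ (A' : C) (x : B₁ ⟶ A) (s : A' ⟶ A) (δ' : S.Ext X A'),
      IsIso (biprod.desc x s) ∧
      S.IsExtriangle (s ≫ a₂) b₂ δ' ∧
      S.TriIso (biprod.lift a₁ a₂) (biprod.desc 0 b₂) δ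
        (biprod.map (𝟙 B₁) (s ≫ a₂)) (biprod.map (0 : B₁ ⟶ (0 : C)) b₂)
        (S.sumExt (0 : S.Ext (0 : C) B₁) δ') ∧
      S.IsDeflation b₂ := by
  obtain ⟨x, hx⟩ := hS.exists_lift_of_comp_eq_zero h biprod.inl (by simp)
  have hxa₁ : x ≫ a₁ = 𝟙 B₁ := by simpa using hx =≫ biprod.fst
  have hxa₂ : x ≫ a₂ = 0 := by simpa using hx =≫ biprod.snd
  have : HasKernel a₁ := hwic A B₁ a₁ (IsSplitEpi.mk' ⟨x, hxa₁⟩)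
  let iA := kernelSplitIso hxa₁
  let δ' := S.push (iA.hom ≫ biprod.snd) δ
  have ha₁δ : S.push a₁ δ = 0 := by
    rw [← biprod.lift_fst a₁ a₂, PreExt.push_comp, hS.push_eq_zero h, PreExt.push_zero]
  have hTI : S.TriIso (biprod.lift a₁ a₂) (biprod.desc 0 b₂) δ
      (biprod.map (𝟙 B₁) (kernel.ι a₁ ≫ a₂)) (biprod.map (0 : B₁ ⟶ 0) b₂)
      (S.sumExt (0 : S.Ext 0 B₁) δ') := by
    refine ⟨iA, Iso.refl _, isoZeroBiprod (isZero_zero C), ?_, ?_, ?_⟩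
    · ext <;> simp [iA, hxa₂]
    · ext <;> simp
    · simp [hS.push_biprod_lift_of_push_eq_zero ha₁δ, PreExt.pull_inr_sumExt_zero_left, iA, δ']
  have hδ' := hS.isExtriangle_of_biprod_map_id (hS.isExtriangle_of_triIso h hTI)
  exact ⟨kernel a₁, x, kernel.ι a₁, δ', iA.isIso_inv, hδ', hTI, _, _, _, hδ'⟩

end Statements

end ExtriPaper
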